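/- arXiv:1104.4273 — 2 statements merged into one kernel-verified Lean document; each statement's English description precedes it below -/
import Mathlib

section
/- Every binary word of length at least 1 is 2-abelian equivalent to a word of the form a a^k b^l (ab)^m a^n or b b^k a^l (ba)^m b^n with k, l, m ≥ 0 and n ∈ {0,1}. -/
/-- Number of occurrences of `w` as a factor (contiguous subword) of `u`. -/
def countOcc {α : Type*} [DecidableEq α] (w u : List α) : ℕ :=
  u.tails.countP (fun t => w.isPrefixOf t)

/-- `k`-abelian equivalence: same prefix and suffix of length `k-1`
(truncated to the words' lengths) and same number of occurrences of
every factor of length `k`. -/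
def KAbEq {α : Type*} [DecidableEq α] (k : ℕ) (u v : List α) : Prop :=
  u.take (k - 1) = v.take (k - 1) ∧
  u.drop (u.length - (k - 1)) = v.drop (v.length - (k - 1)) ∧
  ∀ w : List α, w.length = k → countOcc w u = countOcc w v

/-
Over a binary alphabet the 2-abelian class of a word is determined by its first and last
letters, its numbers of `a`s and `b`s and its number of factors `ba`: counting the factors of
length two that start, resp. end, at a given letter expresses the other three factor counts
through these data. The word `a a^k b^l (ab)^m a^n` with `l ≠ 0`, `n ≤ 1` has `m + n` factors
`ba` and ends in `b` iff `n = 0`. For a word `w` starting with `a`, the same counting gives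
`|w|_ba + 1 ≤ |w|_a` and `|w|_ba + [w ends in b] ≤ |w|_b`, which is what makes `k` and `l`
natural numbers. A word ending in `a` without a factor `ba` is a power of `a`.
-/

open List

section Factors

variable {α : Type*} [DecidableEq α]

@[simp]
lemma countOcc_cons_nil (x : α) (w : List α) : countOcc (x :: w) [] = 0 := by
  simp [countOcc, isPrefixOf]

lemma countOcc_eq_zero_of_not_subset {w u : List α} (h : ¬ w ⊆ u) : countOcc w u = 0 :=
  countP_eq_zero.2 fun _ ht hw =>
    h <| List.Subset.trans (isPrefixOf_iff_prefix.1 hw).subset ((mem_tails _ _).1 ht).subset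

lemma countOcc_pair_cons (x y c : α) (u : List α) :
    countOcc [x, y] (c :: u) = countOcc [x, y] u + if c = x ∧ u.head? = some y then 1 else 0 := by
  rw [countOcc, tails_cons, countP_cons, ← countOcc]
  cases u <;> simp [isPrefixOf, @eq_comm _ x, @eq_comm _ y]

lemma countOcc_pair_append (x y : α) (u v : List α) :
    countOcc [x, y] (u ++ v) = countOcc [x, y] u + countOcc [x, y] v +
      if u.getLast? = some x ∧ v.head? = some y then 1 else 0 := by
  induction u with
  | nil => simp
  | cons c t ih =>
    rw [cons_append, countOcc_pair_cons, ih, countOcc_pair_cons]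
    cases t with
    | nil => simp
    | cons d t => simp only [cons_append, head?_cons, getLast?_cons_cons]; abel

lemma kabEq_two_of_countOcc_pair_eq {u v : List α} (hhead : u.head? = v.head?)
    (hlast : u.getLast? = v.getLast?) (hocc : ∀ x y, countOcc [x, y] u = countOcc [x, y] v) :
    KAbEq 2 u v := by
  have drop_last : ∀ u : List α, u.drop (u.length - 1) = u.getLast?.toList := fun u => by
    rcases eq_or_ne u [] with rfl | hu
    · rfl
    · simp [drop_length_sub_one hu, getLast?_eq_some_getLast hu]
  refine ⟨by simp [take_one, hhead], by simp [drop_last, hlast], fun w hw => ?_⟩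
  obtain ⟨x, y, rfl⟩ : ∃ x y, w = [x, y] := by
    match w, hw with
    | [x, y], _ => exact ⟨x, y, rfl⟩
  exact hocc x y

variable [Fintype α]

lemma sum_countOcc_pair_add_getLast? (x : α) (u : List α) :
    (∑ y, countOcc [x, y] u) + (if u.getLast? = some x then 1 else 0) = u.count x := by
  induction u with
  | nil => simp
  | cons c t ih =>
    simp only [countOcc_pair_cons, Finset.sum_add_distrib]
    cases t with
    | nil => by_cases hc : c = x <;> simp [hc]
    | cons d t =>
      by_cases hc : c = x <;> simp [hc, ← ih]
      omega

lemma sum_countOcc_pair_add_head? (y : α) (u : List α) :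
    (∑ x, countOcc [x, y] u) + (if u.head? = some y then 1 else 0) = u.count y := by
  induction u with
  | nil => simp
  | cons c t ih =>
    by_cases ht : t.head? = some y <;>
      simp [ht, countOcc_pair_cons, Finset.sum_add_distrib, count_cons, ← ih]

end Factors

section NormalForm

variable {α : Type*}

def normalForm (a b : α) (k l m n : ℕ) : List α :=
  a :: (replicate k a ++ replicate l b ++ (replicate m [a, b]).flatten ++ replicate n a)

lemma normalForm_eq_append (a b : α) (k l m n : ℕ) :
    normalForm a b k l m n =
      replicate (k + 1) a ++ replicate l b ++ (replicate m [a, b]).flatten ++ replicate n a :=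
  rfl

lemma flatten_replicate_succ (a b : α) (m : ℕ) :
    (replicate (m + 1) [a, b]).flatten = a :: b :: (replicate m [a, b]).flatten := rfl

lemma getLast?_normalForm (a b : α) (k m : ℕ) {l n : ℕ} (hl : l ≠ 0) :
    (normalForm a b k l m n).getLast? = some (if n = 0 then b else a) := by
  rcases eq_or_ne n 0 with rfl | hn <;> rcases eq_or_ne m 0 with rfl | hm <;>
    simp [normalForm_eq_append, getLast?_append, getLast?_replicate, *]

variable [DecidableEq α] {a b : α}

lemma countOcc_pair_replicate_of_ne {x y c : α} (h : x ≠ c ∨ y ≠ c) (n : ℕ) :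
    countOcc [x, y] (replicate n c) = 0 := by
  refine countOcc_eq_zero_of_not_subset fun hs => ?_
  have hx : x = c := eq_of_mem_replicate (hs (by simp))
  have hy : y = c := eq_of_mem_replicate (hs (by simp))
  exact h.elim (· hx) (· hy)

lemma countOcc_flatten_replicate_pair (hab : a ≠ b) (m : ℕ) :
    countOcc [b, a] (replicate m [a, b]).flatten = m - 1 := by
  induction m with
  | zero => simp
  | succ m ih =>
    cases m with
    | zero => simp [countOcc_pair_cons, hab]
    | succ m =>
      rw [flatten_replicate_succ, countOcc_pair_cons, countOcc_pair_cons, ih,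
        flatten_replicate_succ]
      simp [hab]

lemma count_normalForm_left (hab : a ≠ b) (k l m n : ℕ) :
    (normalForm a b k l m n).count a = k + m + n + 1 := by
  simp [normalForm, count_flatten, count_replicate, hab.symm]
  omega

lemma count_normalForm_right (hab : a ≠ b) (k l m n : ℕ) :
    (normalForm a b k l m n).count b = l + m := by
  simp [normalForm, count_flatten, count_replicate, hab]

lemma countOcc_normalForm (hab : a ≠ b) (k m : ℕ) {l n : ℕ} (hl : l ≠ 0) (hn : n ≤ 1) :
    countOcc [b, a] (normalForm a b k l m n) = m + n := by
  rw [normalForm_eq_append]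
  rcases eq_or_ne m 0 with rfl | hm <;> interval_cases n <;>
    simp [countOcc_pair_append, countOcc_pair_cons, countOcc_pair_replicate_of_ne,
      countOcc_flatten_replicate_pair, getLast?_replicate, head?_replicate, hab.symm, *] <;>
    omega

end NormalForm

section Binary

variable {a b : Fin 2} {w : List (Fin 2)}

lemma fin_two_univ_eq_pair (hab : a ≠ b) : (Finset.univ : Finset (Fin 2)) = {a, b} := by
  revert a b; decide

lemma fin_two_eq_or_eq_of_ne (hab : a ≠ b) (c : Fin 2) : c = a ∨ c = b := by
  revert a b c; decide

lemma count_eq_zero_of_countOcc_eq_zero (hab : a ≠ b) {u : List (Fin 2)}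
    (hlast : u.getLast? = some a) (hba : countOcc [b, a] u = 0) : u.count b = 0 := by
  induction u with
  | nil => rfl
  | cons c t ih =>
    rw [countOcc_pair_cons, Nat.add_eq_zero_iff, ite_eq_right_iff] at hba
    cases t with
    | nil => simp_all
    | cons d t =>
      rw [getLast?_cons_cons] at hlast
      have hd : d = a := by
        rcases fin_two_eq_or_eq_of_ne hab d with h | rfl
        · exact h
        · simpa using ih hlast hba.1
      have hc : c ≠ b := fun hc => one_ne_zero (hba.2 ⟨hc, by simp [hd]⟩)
      simp [hc, ih hlast hba.1]

lemma countOcc_pair_add_getLast? (hab : a ≠ b) (x : Fin 2) (u : List (Fin 2)) :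
    countOcc [x, a] u + countOcc [x, b] u + (if u.getLast? = some x then 1 else 0) =
      u.count x := by
  rw [← Finset.sum_pair hab (f := fun y => countOcc [x, y] u), ← fin_two_univ_eq_pair hab]
  exact sum_countOcc_pair_add_getLast? x u

lemma countOcc_pair_add_head? (hab : a ≠ b) (y : Fin 2) (u : List (Fin 2)) :
    countOcc [a, y] u + countOcc [b, y] u + (if u.head? = some y then 1 else 0) =
      u.count y := by
  rw [← Finset.sum_pair hab (f := fun x => countOcc [x, y] u), ← fin_two_univ_eq_pair hab]
  exact sum_countOcc_pair_add_head? y u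

lemma kabEq_two_of_count_eq (hab : a ≠ b) {u v : List (Fin 2)} (hhead : u.head? = v.head?)
    (hlast : u.getLast? = v.getLast?) (hca : u.count a = v.count a)
    (hcb : u.count b = v.count b) (hba : countOcc [b, a] u = countOcc [b, a] v) :
    KAbEq 2 u v := by
  refine kabEq_two_of_countOcc_pair_eq hhead hlast fun x y => ?_
  have ua := countOcc_pair_add_getLast? hab a u
  have ub := countOcc_pair_add_getLast? hab b u
  have va := countOcc_pair_add_getLast? hab a v
  have vb := countOcc_pair_add_getLast? hab b v
  have ua' := countOcc_pair_add_head? hab a u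
  have va' := countOcc_pair_add_head? hab a v
  rw [hlast] at ua ub
  rw [hhead] at ua'
  rcases fin_two_eq_or_eq_of_ne hab x with rfl | rfl <;>
    rcases fin_two_eq_or_eq_of_ne hab y with rfl | rfl <;> omega

lemma kabEq_normalForm (hab : a ≠ b) (hhead : w.head? = some a) {k l m n : ℕ} (hl : l ≠ 0)
    (hn : n ≤ 1) (hlast : w.getLast? = some (if n = 0 then b else a))
    (hca : w.count a = k + m + n + 1) (hcb : w.count b = l + m)
    (hba : countOcc [b, a] w = m + n) : KAbEq 2 w (normalForm a b k l m n) :=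
  kabEq_two_of_count_eq hab hhead (hlast.trans (getLast?_normalForm a b k m hl).symm)
    (hca.trans (count_normalForm_left hab k l m n).symm)
    (hcb.trans (count_normalForm_right hab k l m n).symm)
    (hba.trans (countOcc_normalForm hab k m hl hn).symm)

lemma kabEq_normalForm_of_count_eq_zero (hab : a ≠ b) (hhead : w.head? = some a)
    (hlast : w.getLast? = some a) (hcb : w.count b = 0) (hba : countOcc [b, a] w = 0) :
    KAbEq 2 w (normalForm a b (w.count a - 1) 0 0 0) := by
  have hca := countOcc_pair_add_head? hab a w
  rw [hhead, if_pos rfl] at hca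
  refine kabEq_two_of_count_eq hab hhead ?_ ?_ ?_ ?_ <;>
    simp [normalForm_eq_append, getLast?_replicate, count_replicate, hab, hlast, hcb, hba,
      countOcc_pair_replicate_of_ne, hab.symm]
  omega

lemma exists_kabEq_normalForm (hab : a ≠ b) (hhead : w.head? = some a) :
    ∃ k l m n, n ≤ 1 ∧ KAbEq 2 w (normalForm a b k l m n) := by
  obtain ⟨c, hlast⟩ : ∃ c, w.getLast? = some c := by
    cases w with
    | nil => simp at hhead
    | cons x t => exact ⟨_, getLast?_cons⟩
  have ha := countOcc_pair_add_head? hab a w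
  have hb := countOcc_pair_add_getLast? hab b w
  rw [hhead, if_pos rfl] at ha
  rw [hlast] at hb
  set s := countOcc [b, a] w
  rcases fin_two_eq_or_eq_of_ne hab c with hc | hc <;> subst c
  · rw [if_neg (Option.some_injective _ |>.ne hab)] at hb
    by_cases hs : s = 0
    · exact ⟨_, _, _, _, zero_le_one, kabEq_normalForm_of_count_eq_zero hab hhead hlast
        (count_eq_zero_of_countOcc_eq_zero hab hlast hs) hs⟩
    · exact ⟨w.count a - 1 - s, w.count b + 1 - s, s - 1, 1, le_rfl, kabEq_normalForm hab hhead
        (by omega) le_rfl hlast (by omega) (by omega) (by omega)⟩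
  · rw [if_pos rfl] at hb
    exact ⟨w.count a - 1 - s, w.count b - s, s, 0, zero_le_one, kabEq_normalForm hab hhead
      (by omega) zero_le_one hlast (by omega) (by omega) (by omega)⟩

end Binary

/-- every nonempty binary word is 2-abelian equivalent to a word of
the form a a^k b^l (ab)^m a^n or b b^k a^l (ba)^m b^n with n ∈ {0,1}
(here a = 0, b = 1). -/
theorem twoAbelian_normal_form (w : List (Fin 2)) (hw : w ≠ []) :
    ∃ k l m n : ℕ, n ≤ 1 ∧
      (KAbEq 2 w (0 :: (List.replicate k (0 : Fin 2) ++ List.replicate l 1 ++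
          (List.replicate m [(0 : Fin 2), 1]).flatten ++ List.replicate n 0)) ∨
       KAbEq 2 w (1 :: (List.replicate k (1 : Fin 2) ++ List.replicate l 0 ++
          (List.replicate m [(1 : Fin 2), 0]).flatten ++ List.replicate n 1))) := by
  obtain ⟨c, t, rfl⟩ := exists_cons_of_ne_nil hw
  rcases fin_two_eq_or_eq_of_ne (zero_ne_one : (0 : Fin 2) ≠ 1) c with rfl | rfl
  · obtain ⟨k, l, m, n, hn, h⟩ := exists_kabEq_normalForm (w := 0 :: t) zero_ne_one rfl
    exact ⟨k, l, m, n, hn, Or.inl h⟩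
  · obtain ⟨k, l, m, n, hn, h⟩ := exists_kabEq_normalForm (w := 1 :: t) one_ne_zero rfl
    exact ⟨k, l, m, n, hn, Or.inr h⟩
end

section
/- The fixed point of the morphism 0 ↦ 001, 1 ↦ 011 contains a 2-abelian cube; specifically the factor 011001·001011·001011 occurring at position 6 of the word 001001011001001011001011011 is a 2-abelian cube. -/
/-- A 2-abelian cube: a concatenation of three nonempty pairwise 2-abelian
equivalent words. -/
def IsTwoAbelianCube {α : Type*} [DecidableEq α] (w : List α) : Prop :=
  ∃ u₁ u₂ u₃ : List α, u₁ ≠ [] ∧ u₂ ≠ [] ∧ u₃ ≠ [] ∧ w = u₁ ++ u₂ ++ u₃ ∧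
    KAbEq 2 u₁ u₂ ∧ KAbEq 2 u₂ u₃ ∧ KAbEq 2 u₁ u₃

/-- One application of the morphism 0 ↦ 001, 1 ↦ 011. -/
def gStep (w : List (Fin 2)) : List (Fin 2) :=
  w.flatMap (fun b => if b = 0 then [0, 0, 1] else [0, 1, 1])


lemma kabeq2 (u v : List (Fin 2))
    (h1 : u.take 1 = v.take 1)
    (h2 : u.drop (u.length - 1) = v.drop (v.length - 1))
    (h3 : ∀ a b : Fin 2, countOcc [a,b] u = countOcc [a,b] v) :
    KAbEq 2 u v := by
  refine ⟨h1, h2, ?_⟩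
  intro w hw
  match w, hw with
  | [a, b], _ => exact h3 a b

/-- the fixed point of 0 ↦ 001, 1 ↦ 011 contains a 2-abelian
cube: its prefix of length 27 is 001001011001001011001011011, and the factor
011001·001011·001011 at position 6 is a 2-abelian cube. -/
theorem fixedPoint_contains_twoAbelianCube :
    gStep^[3] [0] = [0,0,1,0,0,1,0,1,1,0,0,1,0,0,1,0,1,1,0,0,1,0,1,1,0,1,1] ∧
    ((gStep^[3] [0]).drop 6).take 18 =
      [0,1,1,0,0,1] ++ [0,0,1,0,1,1] ++ [0,0,1,0,1,1] ∧
    IsTwoAbelianCube ([0,1,1,0,0,1] ++ [0,0,1,0,1,1] ++ [0,0,1,0,1,1] : List (Fin 2)) := by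
  refine ⟨by decide, by decide, [0,1,1,0,0,1], [0,0,1,0,1,1], [0,0,1,0,1,1],
    by decide, by decide, by decide, by decide, ?_, ?_, ?_⟩ <;>
  · apply kabeq2 <;> first | decide | (intro a b; fin_cases a <;> fin_cases b <;> decide)
end
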